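/- arXiv:1811.07983 — 2 statements merged into one kernel-verified Lean document; each statement's English description precedes it below -/
import Mathlib

section
/- For a Bell-diagonal two-qubit state with eigenvalues λ₀₀, λ₀₁, λ₁₀, λ₁₁ on the Bell basis, where Alice measures in the Z basis, the conditional collision entropy of Alice's outcome A given the purifying system E satisfies H₂(A|E) = −log₂(1/2 + √(λ₀₀λ₀₁) + √(λ₁₀λ₁₁)). -/
open Real

namespace Stmt3

/-- The four (non-normalized) conditional vectors on the purifying system E ≅ ℂ⁴
(with orthonormal basis e₁,e₂,e₃,e₄) obtained when Alice measures her qubit of a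
Bell-diagonal state in the Z basis:
ψ₁ = √λ₀₀ e₁ + √λ₀₁ e₂, ψ₂ = √λ₁₀ e₃ + √λ₁₁ e₄,
ψ₃ = √λ₁₀ e₃ − √λ₁₁ e₄, ψ₄ = √λ₀₀ e₁ − √λ₀₁ e₂. -/
noncomputable def psi (l00 l01 l10 l11 : ℝ) : Fin 4 → Fin 4 → ℂ
  | 0 => ![(sqrt l00 : ℂ), (sqrt l01 : ℂ), 0, 0]
  | 1 => ![0, 0, (sqrt l10 : ℂ), (sqrt l11 : ℂ)]
  | 2 => ![0, 0, (sqrt l10 : ℂ), -(sqrt l11 : ℂ)]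
  | 3 => ![(sqrt l00 : ℂ), -(sqrt l01 : ℂ), 0, 0]

/-- Conditional state of E given Alice's outcome a ∈ {0,1}:
ρ_{E|0} = ψ₁ψ₁† + ψ₂ψ₂†,  ρ_{E|1} = ψ₃ψ₃† + ψ₄ψ₄†. -/
noncomputable def rhoECond (l00 l01 l10 l11 : ℝ) : Fin 2 → Matrix (Fin 4) (Fin 4) ℂ
  | 0 => Matrix.vecMulVec (psi l00 l01 l10 l11 0) (star (psi l00 l01 l10 l11 0))
       + Matrix.vecMulVec (psi l00 l01 l10 l11 1) (star (psi l00 l01 l10 l11 1))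
  | 1 => Matrix.vecMulVec (psi l00 l01 l10 l11 2) (star (psi l00 l01 l10 l11 2))
       + Matrix.vecMulVec (psi l00 l01 l10 l11 3) (star (psi l00 l01 l10 l11 3))

/-- The cq-state ρ_{AE} = (1/2)|0⟩⟨0|⊗ρ_{E|0} + (1/2)|1⟩⟨1|⊗ρ_{E|1}. -/
noncomputable def rhoAE (l00 l01 l10 l11 : ℝ) :
    Matrix (Fin 2 × Fin 4) (Fin 2 × Fin 4) ℂ :=
  fun p q => if p.1 = q.1 then (1 / 2 : ℂ) * rhoECond l00 l01 l10 l11 p.1 p.2 q.2 else 0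

/-- ρ_E = (ρ_{E|0} + ρ_{E|1})/2 is diagonal with entries (λ₀₀,λ₀₁,λ₁₀,λ₁₁); its
(pseudo-)inverse square root ρ_E^{−1/2} is diagonal with entries λ^{−1/2} (0 if λ = 0). -/
noncomputable def rhoEInvSqrt (l00 l01 l10 l11 : ℝ) : Matrix (Fin 4) (Fin 4) ℂ :=
  Matrix.diagonal (fun k =>
    ((if (![l00, l01, l10, l11] k) = 0 then 0 else 1 / sqrt (![l00, l01, l10, l11] k) : ℝ) : ℂ))

/-- I_A ⊗ ρ_E^{−1/2}. -/
noncomputable def invSqrtExt (l00 l01 l10 l11 : ℝ) :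
    Matrix (Fin 2 × Fin 4) (Fin 2 × Fin 4) ℂ :=
  fun p q => if p.1 = q.1 then rhoEInvSqrt l00 l01 l10 l11 p.2 q.2 else 0

set_option maxHeartbeats 2000000 in
theorem key (l00 l01 l10 l11 : ℝ) (h00 : 0 ≤ l00) (h01 : 0 ≤ l01) (h10 : 0 ≤ l10) (h11 : 0 ≤ l11)
    (hsum : l00 + l01 + l10 + l11 = 1) :
    ((invSqrtExt l00 l01 l10 l11 * rhoAE l00 l01 l10 l11 *
        invSqrtExt l00 l01 l10 l11 * rhoAE l00 l01 l10 l11).trace)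
      = ((1/2 + sqrt (l00*l01) + sqrt (l10*l11) : ℝ) : ℂ) := by
  obtain ⟨a, ha, rfl⟩ : ∃ a, 0 ≤ a ∧ l00 = a^2 := ⟨sqrt l00, Real.sqrt_nonneg _, (Real.sq_sqrt h00).symm⟩
  obtain ⟨b, hb, rfl⟩ : ∃ b, 0 ≤ b ∧ l01 = b^2 := ⟨sqrt l01, Real.sqrt_nonneg _, (Real.sq_sqrt h01).symm⟩
  obtain ⟨c, hc, rfl⟩ : ∃ c, 0 ≤ c ∧ l10 = c^2 := ⟨sqrt l10, Real.sqrt_nonneg _, (Real.sq_sqrt h10).symm⟩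
  obtain ⟨d, hd, rfl⟩ : ∃ d, 0 ≤ d ∧ l11 = d^2 := ⟨sqrt l11, Real.sqrt_nonneg _, (Real.sq_sqrt h11).symm⟩
  simp only [Matrix.trace, Matrix.diag, Matrix.mul_apply, Fintype.sum_prod_type,
    Fin.sum_univ_four, Fin.sum_univ_two, invSqrtExt, rhoAE, rhoEInvSqrt, rhoECond, psi,
    Matrix.vecMulVec_apply, Matrix.diagonal_apply, Matrix.add_apply, Pi.star_apply]
  simp
  rw [show a^2*b^2 = (a*b)^2 by ring, show c^2*d^2 = (c*d)^2 by ring,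
    Real.sqrt_sq ha, Real.sqrt_sq hb, Real.sqrt_sq hc, Real.sqrt_sq hd,
    Real.sqrt_sq (mul_nonneg ha hb), Real.sqrt_sq (mul_nonneg hc hd)]
  set ta : ℝ := if a = 0 then 0 else a⁻¹ with hta
  set tb : ℝ := if b = 0 then 0 else b⁻¹ with htb
  set tc : ℝ := if c = 0 then 0 else c⁻¹ with htc
  set td : ℝ := if d = 0 then 0 else d⁻¹ with htd
  have E : ∀ x tx : ℝ, tx = (if x = 0 then 0 else x⁻¹) → tx * (x * x) = x := by
    intro x tx h
    subst h
    by_cases hx : x = 0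
    · simp [hx]
    · rw [if_neg hx]
      field_simp
  have Ea := E a ta hta
  have Eb := E b tb htb
  have Ec := E c tc htc
  have Ed := E d td htd
  have real : ((ta*(a*a) + tb*(b*b))^2 + (tc*(c*c) + td*(d*d))^2) * 2⁻¹
      = 2⁻¹ + a*b + c*d := by
    rw [Ea, Eb, Ec, Ed]
    linear_combination hsum / 2
  trans ((((ta*(a*a) + tb*(b*b))^2 + (tc*(c*c) + td*(d*d))^2) * 2⁻¹ : ℝ) : ℂ)
  · push_cast
    ring
  · rw [real]
    push_cast
    ring

/-- For a Bell-diagonal two-qubit state with Bell-basis eigenvalues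
λ₀₀, λ₀₁, λ₁₀, λ₁₁ (nonnegative, summing to 1), purified to E, where Alice measures
in the Z basis, the conditional collision entropy
H₂(A|E) = −log₂ Tr(ρ_E^{−1/2} ρ_{AE} ρ_E^{−1/2} ρ_{AE}) satisfies
H₂(A|E) = −log₂(1/2 + √(λ₀₀λ₀₁) + √(λ₁₀λ₁₁)). -/
theorem collision_entropy_bell_diagonal (l00 l01 l10 l11 : ℝ)
    (h00 : 0 ≤ l00) (h01 : 0 ≤ l01) (h10 : 0 ≤ l10) (h11 : 0 ≤ l11)
    (hsum : l00 + l01 + l10 + l11 = 1) (H₂ : ℝ)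
    (hH₂ : H₂ = - Real.logb 2
      ((invSqrtExt l00 l01 l10 l11 * rhoAE l00 l01 l10 l11 *
        invSqrtExt l00 l01 l10 l11 * rhoAE l00 l01 l10 l11).trace.re)) :
    H₂ = - Real.logb 2 (1 / 2 + sqrt (l00 * l01) + sqrt (l10 * l11)) := by
  rw [hH₂, key l00 l01 l10 l11 h00 h01 h10 h11 hsum, Complex.ofReal_re]

end Stmt3
end

section
/- For a Bell-diagonal state with λ₁₀ = λ₁₁ = 0, λ₀₀ = R cos θ, λ₀₁ = R sin θ, cos θ + sin θ = 1/R, the maximal CHSH violation β = 2√2 √((λ₀₀ − λ₁₁)² + (λ₀₁ − λ₁₀)²) equals 2√2·R, and the conditional collision entropy H₂(A|E) = −log₂(1/2 + √(λ₀₀λ₀₁)) equals −log₂(1/2 + (1/2)√(2 − β²/4)). This shows the bound H₂(A|E) ≥ −log₂(1/2 + (1/2)√(2 − β²/4)) is tight. -/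
open Real

/-- For a Bell-diagonal state with λ₁₀ = λ₁₁ = 0, λ₀₀ = R cos θ,
λ₀₁ = R sin θ, and cos θ + sin θ = 1/R (R > 1/√2, θ ∈ (0, π/2)), the maximal CHSH
violation β = 2√2 √((λ₀₀ − λ₁₁)² + (λ₀₁ − λ₁₀)²) equals 2√2·R, and the conditional
collision entropy H₂(A|E) = −log₂(1/2 + √(λ₀₀λ₀₁)) equals
−log₂(1/2 + (1/2)√(2 − β²/4)); i.e. the bound
H₂(A|E) ≥ −log₂(1/2 + (1/2)√(2 − β²/4)) is tight. -/
theorem collision_entropy_bound_tight (R θ : ℝ) (hR : 1 / sqrt 2 < R)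
    (hθ0 : 0 < θ) (hθ1 : θ < π / 2) (hconstraint : cos θ + sin θ = 1 / R)
    (l00 l01 l10 l11 : ℝ)
    (hl : l00 = R * cos θ ∧ l01 = R * sin θ ∧ l10 = 0 ∧ l11 = 0)
    (β : ℝ) (hβ : β = 2 * sqrt 2 * sqrt ((l00 - l11) ^ 2 + (l01 - l10) ^ 2)) :
    β = 2 * sqrt 2 * R ∧
      - Real.logb 2 (1 / 2 + sqrt (l00 * l01))
        = - Real.logb 2 (1 / 2 + (1 / 2) * sqrt (2 - β ^ 2 / 4)) := by
  obtain ⟨h00, h01, h10, h11⟩ := hl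
  have hRpos : 0 < R := lt_trans (by positivity) hR
  have hpyth : sin θ ^ 2 + cos θ ^ 2 = 1 := Real.sin_sq_add_cos_sq θ
  have hsum : (l00 - l11) ^ 2 + (l01 - l10) ^ 2 = R ^ 2 := by
    subst h00 h01 h10 h11; nlinarith
  have hβR : β = 2 * sqrt 2 * R := by
    rw [hβ, hsum, Real.sqrt_sq hRpos.le]
  refine ⟨hβR, ?_⟩
  have hRne : R ≠ 0 := hRpos.ne'
  have hcons2 : R ^ 2 * (sin θ * cos θ) = (1 - R ^ 2) / 2 := by
    have h2 : (cos θ + sin θ) ^ 2 = (1 / R) ^ 2 := by rw [hconstraint]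
    field_simp at h2 ⊢
    nlinarith
  have hβ2 : β ^ 2 = 8 * R ^ 2 := by
    rw [hβR]
    have : sqrt 2 ^ 2 = 2 := Real.sq_sqrt (by norm_num)
    nlinarith
  have harg : 2 - β ^ 2 / 4 = 4 * ((1 - R ^ 2) / 2) := by rw [hβ2]; ring
  have hls : l00 * l01 = (1 - R ^ 2) / 2 := by
    subst h00 h01; nlinarith
  rw [harg, hls, Real.sqrt_mul (by norm_num : (0:ℝ) ≤ 4),
    show Real.sqrt 4 = 2 by rw [show (4:ℝ) = 2^2 by norm_num, Real.sqrt_sq]; norm_num]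
  ring_nf
end
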